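/- arXiv:2605.28805 — 5 statements merged into one kernel-verified Lean document; each statement's English description precedes it below -/
import Mathlib

section
/- Let (Ω, μ) be a probability space, A ⊆ Ω a measurable event with μ(A) = p, E a real normed space, and G : Ω → E square-integrable. Define Var(Z) = E[‖Z‖²] − ‖E[Z]‖² for a square-integrable random vector Z : Ω → E. If the indicator random variable I = 1_A is independent of G, then Var(I · G) ≥ p · Var(G). -/
open MeasureTheory ProbabilityTheory

/-- `Var(Z) = E[‖Z‖²] − ‖E[Z]‖²`, the total variance of a vector-valued
random variable. -/
noncomputable def var {Ω E : Type*} [MeasurableSpace Ω]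
    [NormedAddCommGroup E] [NormedSpace ℝ E] [CompleteSpace E]
    (μ : Measure Ω) (Z : Ω → E) : ℝ :=
  (∫ ω, ‖Z ω‖ ^ 2 ∂μ) - ‖∫ ω, Z ω ∂μ‖ ^ 2

/-- Inequality part of Theorem 2: `Var(I · G) ≥ p · Var(G)`. -/
theorem variance_indep_indicator_smul_ge
    {Ω E : Type*} [MeasurableSpace Ω]
    [NormedAddCommGroup E] [NormedSpace ℝ E] [CompleteSpace E]
    [MeasurableSpace E] [BorelSpace E]
    (μ : Measure Ω) [IsProbabilityMeasure μ]
    (A : Set Ω) (hA : MeasurableSet A)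
    (p : ℝ) (hp : (μ A).toReal = p)
    (G : Ω → E) (hG : MemLp G 2 μ)
    (hIndep : IndepFun (A.indicator (fun _ => (1 : ℝ))) G μ) :
    var μ (fun ω => A.indicator (fun _ => (1 : ℝ)) ω • G ω) ≥ p * var μ G := by
  set I : Ω → ℝ := A.indicator (fun _ => (1 : ℝ)) with hI
  have hI_meas : Measurable I := measurable_const.indicator hA
  have hI_int : Integrable I μ := (integrable_const (1 : ℝ)).indicator hA
  have hintI : ∫ ω, I ω ∂μ = p := by
    rw [hI, integral_indicator_const (1 : ℝ) hA, smul_eq_mul, mul_one]; exact hp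
  have hG_int : Integrable G μ := hG.integrable one_le_two
  have hnormsq : Integrable (fun ω => ‖G ω‖ ^ 2) μ := hG.norm.integrable_sq
  -- bounds on p
  have hp0 : 0 ≤ p := hp ▸ ENNReal.toReal_nonneg
  have hp1 : p ≤ 1 := by
    rw [← hp]
    have h1 : μ A ≤ 1 := prob_le_one
    calc (μ A).toReal ≤ (1 : ENNReal).toReal := ENNReal.toReal_mono ENNReal.one_ne_top h1
    _ = 1 := by simp
  -- first moment
  have hIG_int : Integrable (fun ω => I ω • G ω) μ := by
    refine hG_int.mono (hI_meas.aestronglyMeasurable.smul hG.1) ?_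
    filter_upwards with ω
    rw [norm_smul]
    by_cases hω : ω ∈ A <;> simp [hI, Set.indicator_apply, hω, norm_nonneg]
  have hmean : (∫ ω, I ω • G ω ∂μ) = p • ∫ ω, G ω ∂μ := by
    rw [NormedSpace.eq_iff_forall_dual_eq ℝ]
    intro L
    have hLG_int : Integrable (fun ω => L (G ω)) μ := L.integrable_comp hG_int
    have hindL : IndepFun I (fun ω => L (G ω)) μ :=
      hIndep.comp measurable_id L.continuous.measurable
    calc L (∫ ω, I ω • G ω ∂μ) = ∫ ω, L (I ω • G ω) ∂μ :=
          (ContinuousLinearMap.integral_comp_comm L hIG_int).symm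
      _ = ∫ ω, I ω * L (G ω) ∂μ := by
          congr 1; funext ω; rw [L.map_smul, smul_eq_mul]
      _ = (∫ ω, I ω ∂μ) * ∫ ω, L (G ω) ∂μ :=
          hindL.integral_mul_eq_mul_integral hI_int.aestronglyMeasurable hLG_int.aestronglyMeasurable
      _ = p * L (∫ ω, G ω ∂μ) := by
          rw [hintI, ContinuousLinearMap.integral_comp_comm L hG_int]
      _ = L (p • ∫ ω, G ω ∂μ) := by rw [L.map_smul, smul_eq_mul]
  -- second moment
  have hsq : (∫ ω, ‖I ω • G ω‖ ^ 2 ∂μ) = p * ∫ ω, ‖G ω‖ ^ 2 ∂μ := by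
    have hptwise : ∀ ω, ‖I ω • G ω‖ ^ 2 = I ω * ‖G ω‖ ^ 2 := by
      intro ω
      by_cases hω : ω ∈ A <;> simp [hI, Set.indicator_apply, hω, norm_smul]
    have hindsq : IndepFun I (fun ω => ‖G ω‖ ^ 2) μ :=
      hIndep.comp measurable_id (measurable_norm.pow_const 2)
    calc (∫ ω, ‖I ω • G ω‖ ^ 2 ∂μ) = ∫ ω, I ω * ‖G ω‖ ^ 2 ∂μ := by
          congr 1; funext ω; exact hptwise ω
      _ = (∫ ω, I ω ∂μ) * ∫ ω, ‖G ω‖ ^ 2 ∂μ :=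
          hindsq.integral_mul_eq_mul_integral hI_int.aestronglyMeasurable hnormsq.aestronglyMeasurable
      _ = p * ∫ ω, ‖G ω‖ ^ 2 ∂μ := by rw [hintI]
  -- conclude
  have hvar : var μ (fun ω => I ω • G ω)
      = p * (∫ ω, ‖G ω‖ ^ 2 ∂μ) - p ^ 2 * ‖∫ ω, G ω ∂μ‖ ^ 2 := by
    rw [var, hsq, hmean, norm_smul, mul_pow, Real.norm_eq_abs, sq_abs]
  rw [hvar, var]
  have hnn : 0 ≤ ‖∫ ω, G ω ∂μ‖ ^ 2 := sq_nonneg _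
  nlinarith [mul_nonneg (mul_nonneg hp0 (sub_nonneg.2 hp1)) hnn]
end

section
/- Let (Ω, μ) be a probability space, A ⊆ Ω a measurable event with μ(A) = p where 0 < p < 1, E a real normed space, and G : Ω → E square-integrable with E[G] ≠ 0. Define Var(Z) = E[‖Z‖²] − ‖E[Z]‖² for a square-integrable random vector Z : Ω → E. If the indicator random variable I = 1_A is independent of G, then Var(I · G) > p · Var(G). -/
open MeasureTheory ProbabilityTheory

/-- Strict-inequality part of Theorem 2: if `0 < p < 1` and `E[G] ≠ 0`,
then `Var(I · G) > p · Var(G)`. -/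
theorem variance_indep_indicator_smul_gt
    {Ω E : Type*} [MeasurableSpace Ω]
    [NormedAddCommGroup E] [NormedSpace ℝ E] [CompleteSpace E]
    [MeasurableSpace E] [BorelSpace E]
    (μ : Measure Ω) [IsProbabilityMeasure μ]
    (A : Set Ω) (hA : MeasurableSet A)
    (p : ℝ) (hp : (μ A).toReal = p) (hp0 : 0 < p) (hp1 : p < 1)
    (G : Ω → E) (hG : MemLp G 2 μ) (hEG : (∫ ω, G ω ∂μ) ≠ 0)
    (hIndep : IndepFun (A.indicator (fun _ => (1 : ℝ))) G μ) :
    var μ (fun ω => A.indicator (fun _ => (1 : ℝ)) ω • G ω) > p * var μ G := by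
  set I : Ω → ℝ := A.indicator (fun _ => (1 : ℝ)) with hI
  have hIvals : ∀ ω, I ω = 0 ∨ I ω = 1 := by
    intro ω
    by_cases h : ω ∈ A <;> simp [hI, Set.indicator_apply, h]
  have hIint : Integrable I μ := (integrable_const (1 : ℝ)).indicator hA
  have hIintegral : ∫ ω, I ω ∂μ = p := by
    rw [hI]
    rw [integral_indicator_const (1 : ℝ) hA]
    simp [hp, measureReal_def]
  have hGint : Integrable G μ := hG.integrable one_le_two
  have hGsq : Integrable (fun ω => ‖G ω‖ ^ 2) μ := by
    have := hG.integrable_norm_rpow two_ne_zero ENNReal.ofNat_ne_top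
    simpa [ENNReal.toReal_ofNat, Real.rpow_natCast] using this
  -- first moment
  have hsmul_eq : (fun ω => I ω • G ω) = A.indicator G := by
    funext ω
    by_cases h : ω ∈ A <;> simp [hI, Set.indicator_apply, h]
  have hIGint : Integrable (fun ω => I ω • G ω) μ := by
    rw [hsmul_eq]; exact hGint.indicator hA
  have hmean : ∫ ω, I ω • G ω ∂μ = p • ∫ ω, G ω ∂μ := by
    rw [NormedSpace.eq_iff_forall_dual_eq ℝ]
    intro L
    have h1 : L (∫ ω, I ω • G ω ∂μ) = ∫ ω, L (I ω • G ω) ∂μ :=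
      (L.integral_comp_comm hIGint).symm
    have h2 : (fun ω => L (I ω • G ω)) = fun ω => I ω * L (G ω) := by
      funext ω; simp
    have hIndep' : IndepFun I (fun ω => L (G ω)) μ :=
      hIndep.comp measurable_id L.measurable
    have hLGint : Integrable (fun ω => L (G ω)) μ := L.integrable_comp hGint
    have h3 : ∫ ω, I ω * L (G ω) ∂μ = (∫ ω, I ω ∂μ) * ∫ ω, L (G ω) ∂μ :=
      hIndep'.integral_fun_mul_eq_mul_integral hIint.aestronglyMeasurable hLGint.aestronglyMeasurable
    rw [h1, h2, h3, hIintegral, ContinuousLinearMap.map_smul, smul_eq_mul,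
      L.integral_comp_comm hGint]
  -- second moment
  have hsq : ∫ ω, ‖I ω • G ω‖ ^ 2 ∂μ = p * ∫ ω, ‖G ω‖ ^ 2 ∂μ := by
    have h2 : (fun ω => ‖I ω • G ω‖ ^ 2) = fun ω => I ω * ‖G ω‖ ^ 2 := by
      funext ω
      rcases hIvals ω with h | h <;> simp [h, norm_smul, mul_pow]
    have hIndep' : IndepFun I (fun ω => ‖G ω‖ ^ 2) μ :=
      hIndep.comp measurable_id (measurable_norm.pow_const 2)
    rw [h2]
    have h3 := hIndep'.integral_mul_eq_mul_integral hIint.aestronglyMeasurable hGsq.aestronglyMeasurable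
    rw [show (I * fun ω => ‖G ω‖ ^ 2) = fun ω => I ω * ‖G ω‖ ^ 2 from rfl] at h3
    rw [h3, hIintegral]
  have hnEG : (0 : ℝ) < ‖∫ ω, G ω ∂μ‖ ^ 2 := pow_pos (norm_pos_iff.mpr hEG) 2
  unfold var
  rw [hsq, hmean, norm_smul]
  have : ‖p‖ = p := abs_of_pos hp0
  rw [this]
  nlinarith [mul_pos (mul_pos hp0 (sub_pos.mpr hp1)) hnEG]
end

section
/- Let (Ω, μ) be a probability space, A ⊆ Ω a measurable event with μ(A) = p where 0 < p ≤ 1, E a real normed space, and G : Ω → E square-integrable with Var(G) > 0, where Var(Z) = E[‖Z‖²] − ‖E[Z]‖². Define SNR(Z) = ‖E[Z]‖² / Var(Z). If the indicator random variable I = 1_A is independent of G, then SNR(I · G) ≤ p · SNR(G). -/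
open MeasureTheory ProbabilityTheory

/-- `SNR(Z) = ‖E[Z]‖² / Var(Z)`, the signal-to-noise ratio of a vector-valued
random variable. -/
noncomputable def snr {Ω E : Type*} [MeasurableSpace Ω]
    [NormedAddCommGroup E] [NormedSpace ℝ E] [CompleteSpace E]
    (μ : Measure Ω) (Z : Ω → E) : ℝ :=
  ‖∫ ω, Z ω ∂μ‖ ^ 2 / var μ Z

/-- Corollary 1: Bernoulli gating reduces the signal-to-noise ratio by at
least the factor `p`: `SNR(I · G) ≤ p · SNR(G)`. -/
theorem snr_indep_indicator_smul_le
    {Ω E : Type*} [MeasurableSpace Ω]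
    [NormedAddCommGroup E] [NormedSpace ℝ E] [CompleteSpace E]
    [MeasurableSpace E] [BorelSpace E]
    (μ : Measure Ω) [IsProbabilityMeasure μ]
    (A : Set Ω) (hA : MeasurableSet A)
    (p : ℝ) (hp : (μ A).toReal = p) (hp0 : 0 < p) (hp1 : p ≤ 1)
    (G : Ω → E) (hG : MemLp G 2 μ) (hvar : 0 < var μ G)
    (hIndep : IndepFun (A.indicator (fun _ => (1 : ℝ))) G μ) :
    snr μ (fun ω => A.indicator (fun _ => (1 : ℝ)) ω • G ω) ≤ p * snr μ G := by
  set I : Ω → ℝ := A.indicator (fun _ => (1 : ℝ)) with hI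
  have hImeas : Measurable I := measurable_const.indicator hA
  have hIint : Integrable I μ := (integrable_const (1 : ℝ)).indicator hA
  have hIint' : ∫ ω, I ω ∂μ = p := by
    rw [hI, integral_indicator_const (1 : ℝ) hA, smul_eq_mul, mul_one]; exact hp
  have hGint : Integrable G μ := hG.integrable one_le_two
  have hIGfun : (fun ω => I ω • G ω) = A.indicator G := by
    funext ω
    by_cases h : ω ∈ A <;>
      simp [hI, Set.indicator_of_mem, Set.indicator_of_notMem, h]
  have hIGint : Integrable (fun ω => I ω • G ω) μ := by
    rw [hIGfun]; exact hGint.indicator hA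
  have hG2int : Integrable (fun ω => ‖G ω‖ ^ 2) μ :=
    (memLp_two_iff_integrable_sq_norm hG.1).mp hG
  -- first moment
  have h1 : ∫ ω, I ω • G ω ∂μ = p • ∫ ω, G ω ∂μ := by
    rw [NormedSpace.eq_iff_forall_dual_eq ℝ]
    intro L
    have hLint : Integrable (fun ω => L (G ω)) μ := L.integrable_comp hGint
    have hind : IndepFun I (fun ω => L (G ω)) μ :=
      hIndep.comp measurable_id L.measurable
    calc L (∫ ω, I ω • G ω ∂μ) = ∫ ω, L (I ω • G ω) ∂μ :=
          (L.integral_comp_comm hIGint).symm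
      _ = ∫ ω, I ω * L (G ω) ∂μ := by
          simp only [_root_.map_smul, smul_eq_mul]
      _ = (∫ ω, I ω ∂μ) * ∫ ω, L (G ω) ∂μ :=
          hind.integral_fun_mul_eq_mul_integral hIint.aestronglyMeasurable hLint.aestronglyMeasurable
      _ = p * L (∫ ω, G ω ∂μ) := by rw [hIint', L.integral_comp_comm hGint]
      _ = L (p • ∫ ω, G ω ∂μ) := by rw [_root_.map_smul, smul_eq_mul]
  -- second moment
  have hpt : ∀ ω, ‖I ω • G ω‖ ^ 2 = I ω * ‖G ω‖ ^ 2 := by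
    intro ω
    by_cases h : ω ∈ A <;>
      simp [hI, Set.indicator_of_mem, Set.indicator_of_notMem, h]
  have h2 : ∫ ω, ‖I ω • G ω‖ ^ 2 ∂μ = p * ∫ ω, ‖G ω‖ ^ 2 ∂μ := by
    have hind : IndepFun I (fun ω => ‖G ω‖ ^ 2) μ :=
      hIndep.comp measurable_id (measurable_norm.pow_const 2)
    calc ∫ ω, ‖I ω • G ω‖ ^ 2 ∂μ = ∫ ω, I ω * ‖G ω‖ ^ 2 ∂μ := by
          simp only [hpt]
      _ = (∫ ω, I ω ∂μ) * ∫ ω, ‖G ω‖ ^ 2 ∂μ :=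
          hind.integral_fun_mul_eq_mul_integral hIint.aestronglyMeasurable hG2int.aestronglyMeasurable
      _ = p * ∫ ω, ‖G ω‖ ^ 2 ∂μ := by rw [hIint']
  -- abbreviations
  set m : E := ∫ ω, G ω ∂μ with hm
  set s : ℝ := ∫ ω, ‖G ω‖ ^ 2 ∂μ with hs
  set M : ℝ := ‖m‖ ^ 2 with hM
  have hM0 : 0 ≤ M := sq_nonneg _
  have hvG : var μ G = s - M := rfl
  have hsM : 0 < s - M := hvG ▸ hvar
  have hnorm : ‖∫ ω, I ω • G ω ∂μ‖ ^ 2 = p ^ 2 * M := by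
    rw [h1, norm_smul, Real.norm_eq_abs, abs_of_pos hp0, mul_pow, hM]
  have hvarI : var μ (fun ω => I ω • G ω) = p * s - p ^ 2 * M := by
    rw [var, h2, hnorm]
  have hden : 0 < s - p * M := by
    have : p * M ≤ M := by
      nlinarith
    linarith
  have hfact : p * s - p ^ 2 * M = p * (s - p * M) := by ring
  rw [snr, snr, hvarI, hnorm, hvG, hfact]
  have hL : p ^ 2 * M / (p * (s - p * M)) = p * M / (s - p * M) := by
    rw [pow_two, mul_assoc, mul_div_mul_left _ _ (ne_of_gt hp0)]
  rw [hL, ← mul_div_assoc]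
  exact div_le_div_of_nonneg_left (by positivity) hsM (by nlinarith)
end

section
/- Let (Ω, μ) be a probability space, A ⊆ Ω a measurable event with μ(A) = p where 0 < p < 1, E a real normed space, and G : Ω → E square-integrable with Var(G) > 0 and E[G] ≠ 0, where Var(Z) = E[‖Z‖²] − ‖E[Z]‖². Define SNR(Z) = ‖E[Z]‖² / Var(Z). If the indicator random variable I = 1_A is independent of G, then SNR(I · G) < p · SNR(G). -/
open MeasureTheory ProbabilityTheory

/-- Strict-inequality part of Corollary 1: if `0 < p < 1` and `E[G] ≠ 0`,
then `SNR(I · G) < p · SNR(G)`. -/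
theorem snr_indep_indicator_smul_lt
    {Ω E : Type*} [MeasurableSpace Ω]
    [NormedAddCommGroup E] [NormedSpace ℝ E] [CompleteSpace E]
    [MeasurableSpace E] [BorelSpace E]
    (μ : Measure Ω) [IsProbabilityMeasure μ]
    (A : Set Ω) (hA : MeasurableSet A)
    (p : ℝ) (hp : (μ A).toReal = p) (hp0 : 0 < p) (hp1 : p < 1)
    (G : Ω → E) (hG : MemLp G 2 μ) (hvar : 0 < var μ G)
    (hEG : (∫ ω, G ω ∂μ) ≠ 0)
    (hIndep : IndepFun (A.indicator (fun _ => (1 : ℝ))) G μ) :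
    snr μ (fun ω => A.indicator (fun _ => (1 : ℝ)) ω • G ω) < p * snr μ G := by
  set I : Ω → ℝ := A.indicator (fun _ => (1 : ℝ)) with hI
  -- measurable version of G
  have hintG : Integrable G μ := hG.integrable one_le_two
  -- mean of I • G
  have hintIG : Integrable (fun ω => I ω • G ω) μ := by
    have hfun : (fun ω => I ω • G ω) = A.indicator G := by
      ext ω; by_cases h : ω ∈ A <;> simp [hI, Set.indicator_apply, h]
    rw [hfun]; exact hintG.indicator hA
  have hintI : Integrable I μ := (integrable_const (1 : ℝ)).indicator hA
  have hEI : (∫ ω, I ω ∂μ) = p := by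
    rw [hI, integral_indicator_const _ hA, smul_eq_mul, mul_one, measureReal_def, hp]
  have hmean : (∫ ω, I ω • G ω ∂μ) = p • ∫ ω, G ω ∂μ := by
    rw [NormedSpace.eq_iff_forall_dual_eq (𝕜 := ℝ)]
    intro L
    have h1 : L (∫ ω, I ω • G ω ∂μ) = ∫ ω, I ω * L (G ω) ∂μ := by
      rw [← L.integral_comp_comm hintIG]
      congr 1; ext ω; rw [_root_.map_smul, smul_eq_mul]
    have hIndepL : IndepFun I (fun ω => L (G ω)) μ :=
      hIndep.comp measurable_id L.continuous.measurable
    have h2 : (∫ ω, I ω * L (G ω) ∂μ) = (∫ ω, I ω ∂μ) * ∫ ω, L (G ω) ∂μ := by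
      have := hIndepL.integral_mul_eq_mul_integral hintI.aestronglyMeasurable (L.integrable_comp hintG).aestronglyMeasurable
      simpa [Pi.mul_apply] using this
    rw [h1, h2, hEI, L.integral_comp_comm hintG, _root_.map_smul, smul_eq_mul]
  -- second moment of I • G
  have hsq : (∫ ω, ‖I ω • G ω‖ ^ 2 ∂μ) = p * ∫ ω, ‖G ω‖ ^ 2 ∂μ := by
    have hfun : (fun ω => ‖I ω • G ω‖ ^ 2) = fun ω => I ω * ‖G ω‖ ^ 2 := by
      ext ω; by_cases h : ω ∈ A <;> simp [hI, Set.indicator_apply, h]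
    have hIndep2 : IndepFun I (fun ω => ‖G ω‖ ^ 2) μ :=
      hIndep.comp measurable_id ((measurable_norm.pow_const 2))
    have hintN : Integrable (fun ω => ‖G ω‖ ^ 2) μ := hG.norm.integrable_sq
    have h2 := hIndep2.integral_mul_eq_mul_integral hintI.aestronglyMeasurable hintN.aestronglyMeasurable
    rw [hfun]
    calc (∫ ω, I ω * ‖G ω‖ ^ 2 ∂μ) = (∫ ω, I ω ∂μ) * ∫ ω, ‖G ω‖ ^ 2 ∂μ := by
          simpa [Pi.mul_apply] using h2
      _ = p * ∫ ω, ‖G ω‖ ^ 2 ∂μ := by rw [hEI]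
  -- arithmetic
  have hvarI : var μ (fun ω => I ω • G ω)
      = p * (∫ ω, ‖G ω‖ ^ 2 ∂μ) - p ^ 2 * ‖∫ ω, G ω ∂μ‖ ^ 2 := by
    rw [var, hsq, hmean, norm_smul, mul_pow, Real.norm_eq_abs,
      abs_of_pos hp0]
  set a : ℝ := ‖∫ ω, G ω ∂μ‖ ^ 2 with haa
  set S : ℝ := ∫ ω, ‖G ω‖ ^ 2 ∂μ with hS
  have ha : 0 < a := pow_pos (norm_pos_iff.mpr hEG) 2
  have hv : var μ G = S - a := rfl
  have hvpos : 0 < S - a := hv ▸ hvar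
  have hsnrG : snr μ G = a / (S - a) := by rw [snr, hv]
  have hmean2 : ‖∫ ω, I ω • G ω ∂μ‖ ^ 2 = p ^ 2 * a := by
    rw [hmean, norm_smul, mul_pow, Real.norm_eq_abs, abs_of_pos hp0]
  have hdenpos : 0 < p * S - p ^ 2 * a := by
    nlinarith [mul_pos hp0 hvpos, mul_pos (mul_pos hp0 (sub_pos.mpr hp1)) ha]
  rw [snr, hmean2, hvarI, hsnrG]
  rw [mul_div_assoc' p a (S - a), div_lt_div_iff₀ hdenpos hvpos]
  nlinarith [mul_pos (mul_pos (mul_pos hp0 hp0) (mul_pos ha ha)) (sub_pos.mpr hp1)]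
end

section
/- Let (Ω, μ) be a probability space, A ⊆ Ω a measurable event with μ(A) = p, E a real normed space, and G : Ω → E square-integrable, where Var(Z) = E[‖Z‖²] − ‖E[Z]‖². If the indicator random variable I = 1_A is independent of G, then the excess variance of the gated estimator over p times the ungated variance is exactly Var(I · G) − p · Var(G) = p(1 − p) · ‖E[G]‖², which is nonnegative and equals zero if and only if p ∈ {0, 1} or E[G] = 0. -/
open MeasureTheory ProbabilityTheory

/-- Equality-case characterization accompanying Theorem 2: the excess variance
of the gated estimator is exactly `p(1 − p) · ‖E[G]‖²`, which is nonnegative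
and vanishes iff `p ∈ {0, 1}` or `E[G] = 0`. -/
theorem excess_variance_indep_indicator_smul
    {Ω E : Type*} [MeasurableSpace Ω]
    [NormedAddCommGroup E] [NormedSpace ℝ E] [CompleteSpace E]
    [MeasurableSpace E] [BorelSpace E]
    (μ : Measure Ω) [IsProbabilityMeasure μ]
    (A : Set Ω) (hA : MeasurableSet A)
    (p : ℝ) (hp : (μ A).toReal = p)
    (G : Ω → E) (hG : MemLp G 2 μ)
    (hIndep : IndepFun (A.indicator (fun _ => (1 : ℝ))) G μ) :
    var μ (fun ω => A.indicator (fun _ => (1 : ℝ)) ω • G ω) - p * var μ G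
        = p * (1 - p) * ‖∫ ω, G ω ∂μ‖ ^ 2
      ∧ 0 ≤ p * (1 - p) * ‖∫ ω, G ω ∂μ‖ ^ 2
      ∧ (p * (1 - p) * ‖∫ ω, G ω ∂μ‖ ^ 2 = 0
          ↔ (p = 0 ∨ p = 1) ∨ (∫ ω, G ω ∂μ) = 0) := by
  set I : Ω → ℝ := A.indicator (fun _ => (1 : ℝ)) with hIdef
  have hImeas : Measurable I := measurable_const.indicator hA
  have hIint : Integrable I μ :=
    (integrable_const (1 : ℝ)).indicator hA
  have hIintegral : ∫ ω, I ω ∂μ = p := by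
    rw [hIdef, integral_indicator_const _ hA, smul_eq_mul, mul_one]
    exact hp
  have hGint : Integrable G μ := hG.integrable one_le_two
  have hGsq : Integrable (fun ω => ‖G ω‖ ^ 2) μ := by
    have := hG.integrable_norm_rpow (by norm_num) (by norm_num)
    simpa [ENNReal.toReal_ofNat, Real.rpow_natCast] using this
  -- second moment of I • G
  have hnorm : ∀ ω, ‖I ω • G ω‖ ^ 2 = I ω * ‖G ω‖ ^ 2 := by
    intro ω
    by_cases h : ω ∈ A <;> simp [hIdef, Set.indicator_of_mem, Set.indicator_of_notMem, h,
      norm_smul]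
  have hIndepSq : IndepFun I (fun ω => ‖G ω‖ ^ 2) μ :=
    hIndep.comp measurable_id ((measurable_norm).pow_const 2)
  have hmom2 : ∫ ω, ‖I ω • G ω‖ ^ 2 ∂μ = p * ∫ ω, ‖G ω‖ ^ 2 ∂μ := by
    calc ∫ ω, ‖I ω • G ω‖ ^ 2 ∂μ = ∫ ω, I ω * ‖G ω‖ ^ 2 ∂μ := by
          simp_rw [hnorm]
      _ = (∫ ω, I ω ∂μ) * ∫ ω, ‖G ω‖ ^ 2 ∂μ :=
          hIndepSq.integral_fun_mul_eq_mul_integral hIint.aestronglyMeasurable hGsq.aestronglyMeasurable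
      _ = p * ∫ ω, ‖G ω‖ ^ 2 ∂μ := by rw [hIintegral]
  -- first moment of I • G
  have hIGint : Integrable (fun ω => I ω • G ω) μ := by
    have : (fun ω => I ω • G ω) = A.indicator G := by
      funext ω
      by_cases h : ω ∈ A <;> simp [hIdef, Set.indicator_of_mem, Set.indicator_of_notMem, h]
    rw [this]
    exact hGint.indicator hA
  have hmom1 : ∫ ω, I ω • G ω ∂μ = p • ∫ ω, G ω ∂μ := by
    rw [NormedSpace.eq_iff_forall_dual_eq ℝ]
    intro L
    have hLint : Integrable (fun ω => L (G ω)) μ := L.integrable_comp hGint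
    have hIndepL : IndepFun I (fun ω => L (G ω)) μ :=
      hIndep.comp measurable_id L.measurable
    calc L (∫ ω, I ω • G ω ∂μ) = ∫ ω, L (I ω • G ω) ∂μ :=
          (L.integral_comp_comm hIGint).symm
      _ = ∫ ω, I ω * L (G ω) ∂μ := by simp [L.map_smul]
      _ = (∫ ω, I ω ∂μ) * ∫ ω, L (G ω) ∂μ :=
          hIndepL.integral_fun_mul_eq_mul_integral hIint.aestronglyMeasurable hLint.aestronglyMeasurable
      _ = p * L (∫ ω, G ω ∂μ) := by rw [hIintegral, L.integral_comp_comm hGint]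
      _ = L (p • ∫ ω, G ω ∂μ) := by rw [L.map_smul, smul_eq_mul]
  have hp0 : 0 ≤ p := hp ▸ ENNReal.toReal_nonneg
  have hp1 : p ≤ 1 := by
    rw [← hp]
    exact ENNReal.toReal_le_of_le_ofReal one_pos.le (by simpa using prob_le_one)
  refine ⟨?_, ?_, ?_⟩
  · rw [var, var, hmom2, hmom1, norm_smul, mul_pow, Real.norm_eq_abs, sq_abs]
    ring
  · have : 0 ≤ 1 - p := by linarith
    positivity
  · rw [mul_eq_zero, mul_eq_zero, sub_eq_zero, pow_eq_zero_iff (two_ne_zero), norm_eq_zero]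
    constructor
    · rintro ((h | h) | h)
      · exact Or.inl (Or.inl h)
      · exact Or.inl (Or.inr h.symm)
      · exact Or.inr h
    · rintro ((h | h) | h)
      · exact Or.inl (Or.inl h)
      · exact Or.inl (Or.inr h.symm)
      · exact Or.inr h
end
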